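/- arXiv:2008.13355 — 3 statements merged into one kernel-verified Lean document; each statement's English description precedes it below -/
import Mathlib

section
/- There exist a labelled transition system and a symmetric relation R on its states such that R satisfies condition (T) of branching bisimulations and R relates divergent states to divergent states only, yet R relates two states that are not divergence-preserving branching bisimilar. Hence a symmetric relation satisfying (T) that only relates divergent states to divergent states is not necessarily included in a divergence-preserving branching bisimulation. -/
/-- The internal-step relation: `s →τ s'`. -/
def TauStep {S Act : Type*} (tr : S → Act → S → Prop) (τ : Act) : S → S → Prop :=
  fun x y => tr x τ y

/-- `⇒` : the reflexive-transitive closure of `→τ`. -/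
def TauReach {S Act : Type*} (tr : S → Act → S → Prop) (τ : Act) : S → S → Prop :=
  Relation.ReflTransGen (TauStep tr τ)

/-- `→τ⁺` : the transitive closure of `→τ`. -/
def TauPlus {S Act : Type*} (tr : S → Act → S → Prop) (τ : Act) : S → S → Prop :=
  Relation.TransGen (TauStep tr τ)

/-- `s →(a)̂ s'` : either `s →a s'`, or `a = τ` and `s = s'`. -/
def OptStep {S Act : Type*} (tr : S → Act → S → Prop) (τ : Act)
    (s : S) (a : Act) (s' : S) : Prop :=
  tr s a s' ∨ (a = τ ∧ s = s')

/-- Condition (T) of branching bisimulations. -/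
def CondT {S Act : Type*} (tr : S → Act → S → Prop) (τ : Act) (B : S → S → Prop) : Prop :=
  ∀ s t a s', B s t → tr s a s' →
    ∃ t'' t', TauReach tr τ t t'' ∧ OptStep tr τ t'' a t' ∧ B s t'' ∧ B s' t'

/-- A branching bisimulation: a symmetric relation satisfying condition (T). -/
def IsBranchingBisim {S Act : Type*} (tr : S → Act → S → Prop) (τ : Act)
    (B : S → S → Prop) : Prop :=
  Symmetric B ∧ CondT tr τ B

/-- The divergence condition (D). -/
def CondD {S Act : Type*} (tr : S → Act → S → Prop) (τ : Act) (B : S → S → Prop) : Prop :=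
  ∀ s t (sk : ℕ → S), B s t → sk 0 = s → (∀ k, tr (sk k) τ (sk (k + 1))) →
    (∀ k, B (sk k) t) → ∃ t', TauPlus tr τ t t' ∧ ∃ k, B (sk k) t'

/-- A divergence-preserving branching bisimulation. -/
def IsDPBB {S Act : Type*} (tr : S → Act → S → Prop) (τ : Act) (B : S → S → Prop) : Prop :=
  IsBranchingBisim tr τ B ∧ CondD tr τ B

/-- Divergence-preserving branching bisimilarity `s ⇔Δ t`. -/
def DPBBisimilar {S Act : Type*} (tr : S → Act → S → Prop) (τ : Act) (s t : S) : Prop :=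
  ∃ B, IsDPBB tr τ B ∧ B s t

/-- A state is divergent if it admits an infinite sequence of τ-transitions. -/
def Divergent {S Act : Type*} (tr : S → Act → S → Prop) (τ : Act) (s : S) : Prop :=
  ∃ sk : ℕ → S, sk 0 = s ∧ ∀ k, tr (sk k) τ (sk (k + 1))

/-!
Take `s` with a τ-loop, a τ-step to a τ-looping state `s₁` and an `a`-step to `nil`, and `t`
with a τ-step to a τ-looping state `t₁` and an `a`-step to `nil`. Relating `s ~ t`, `s₁ ~ t₁`
and `nil ~ nil` gives a symmetric relation satisfying (T) — the τ-loop of `s` is matched by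
`t` stuttering — under which related states are both divergent or both not. But any
divergence-preserving branching bisimulation relating `s` and `t` must, by (D) applied to the
τ-loop of `s`, relate `s` to a proper τ-descendant of `t`, which can only be `t₁`; and `t₁`
cannot perform `a`, contradicting (T).
-/

section General

variable {S Act : Type*} {tr : S → Act → S → Prop} {τ : Act} {B : S → S → Prop}

lemma condT_of_forall_optStep
    (h : ∀ s t a s', B s t → tr s a s' → ∃ t', OptStep tr τ t a t' ∧ B s' t') :
    CondT tr τ B := by
  intro s t a s' hst hs
  obtain ⟨t', ht, hB⟩ := h s t a s' hst hs
  exact ⟨t, t', .refl, ht, hst, hB⟩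

lemma CondT.exists_weak_step (hT : CondT tr τ B) {s t s' : S} {a : Act}
    (hst : B s t) (hs : tr s a s') (ha : a ≠ τ) :
    ∃ t'' t', TauReach tr τ t t'' ∧ tr t'' a t' := by
  obtain ⟨t'', t', hreach, hstep | ⟨rfl, -⟩, -⟩ := hT s t a s' hst hs
  · exact ⟨t'', t', hreach, hstep⟩
  · exact absurd rfl ha

lemma CondD.exists_tauPlus_of_tau_loop (hD : CondD tr τ B) {s t : S}
    (hs : tr s τ s) (hst : B s t) : ∃ t', TauPlus tr τ t t' ∧ B s t' := by
  obtain ⟨t', ht, -, hB⟩ := hD s t (fun _ => s) hst rfl (fun _ => hs) (fun _ => hst)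
  exact ⟨t', ht, hB⟩

lemma divergent_of_tau_loop {s : S} (hs : tr s τ s) : Divergent tr τ s :=
  ⟨fun _ => s, rfl, fun _ => hs⟩

lemma Divergent.of_tau_step {s s' : S} (hs' : Divergent tr τ s') (hs : tr s τ s') :
    Divergent tr τ s := by
  obtain ⟨sk, h0, hk⟩ := hs'
  refine ⟨fun | 0 => s | k + 1 => sk k, rfl, fun k => ?_⟩
  cases k with
  | zero => subst h0; exact hs
  | succ k => exact hk k

lemma tauReach_eq_of_tau_succ_eq {s s' : S} (hs : ∀ x, tr s τ x → x = s)
    (h : TauReach tr τ s s') : s' = s := by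
  induction h with
  | refl => rfl
  | tail _ hstep ih => subst ih; exact hs _ hstep

end General

namespace DivergenceCounterexample

inductive State : Type
  | s | s₁ | t | t₁ | nil

inductive Label : Type
  | tau | a

open State Label

inductive Step : State → Label → State → Prop
  | s_tau_s : Step s tau s
  | s_tau_s₁ : Step s tau s₁
  | s₁_tau_s₁ : Step s₁ tau s₁
  | s_a_nil : Step s a nil
  | t_tau_t₁ : Step t tau t₁
  | t₁_tau_t₁ : Step t₁ tau t₁
  | t_a_nil : Step t a nil

inductive Rel : State → State → Prop
  | s_t : Rel s t
  | t_s : Rel t s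
  | s₁_t₁ : Rel s₁ t₁
  | t₁_s₁ : Rel t₁ s₁
  | nil_nil : Rel nil nil

lemma rel_symmetric : Symmetric Rel := by
  intro x y h
  cases h <;> constructor

lemma condT_rel : CondT Step tau Rel := by
  refine condT_of_forall_optStep fun x y l x' hxy hx => ?_
  cases hxy <;> cases hx
  case s_t.s_tau_s => exact ⟨t, .inr ⟨rfl, rfl⟩, .s_t⟩
  case s_t.s_tau_s₁ => exact ⟨t₁, .inl .t_tau_t₁, .s₁_t₁⟩
  case s_t.s_a_nil => exact ⟨nil, .inl .t_a_nil, .nil_nil⟩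
  case t_s.t_tau_t₁ => exact ⟨s₁, .inl .s_tau_s₁, .t₁_s₁⟩
  case t_s.t_a_nil => exact ⟨nil, .inl .s_a_nil, .nil_nil⟩
  case s₁_t₁.s₁_tau_s₁ => exact ⟨t₁, .inl .t₁_tau_t₁, .s₁_t₁⟩
  case t₁_s₁.t₁_tau_t₁ => exact ⟨s₁, .inl .s₁_tau_s₁, .t₁_s₁⟩

lemma divergent_of_rel {x y : State} (h : Rel x y) (hx : Divergent Step tau x) :
    Divergent Step tau y := by
  cases h with
  | s_t => exact (divergent_of_tau_loop .t₁_tau_t₁).of_tau_step .t_tau_t₁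
  | t_s => exact divergent_of_tau_loop .s_tau_s
  | s₁_t₁ => exact divergent_of_tau_loop .t₁_tau_t₁
  | t₁_s₁ => exact divergent_of_tau_loop .s₁_tau_s₁
  | nil_nil => exact hx

lemma tau_succ_t₁ {x : State} (h : Step t₁ tau x) : x = t₁ := by
  cases h; rfl

lemma tauPlus_t {x : State} (h : TauPlus Step tau t x) : x = t₁ := by
  obtain ⟨y, hy, hreach⟩ := Relation.TransGen.head'_iff.mp h
  cases hy
  exact tauReach_eq_of_tau_succ_eq (fun _ => tau_succ_t₁) hreach

lemma not_dpbBisimilar_s_t : ¬ DPBBisimilar Step tau s t := by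
  rintro ⟨B, ⟨⟨-, hT⟩, hD⟩, hst⟩
  obtain ⟨x, hx, hsx⟩ := hD.exists_tauPlus_of_tau_loop .s_tau_s hst
  obtain rfl := tauPlus_t hx
  obtain ⟨y, z, hy, hyz⟩ := hT.exists_weak_step hsx .s_a_nil Label.noConfusion
  obtain rfl := tauReach_eq_of_tau_succ_eq (fun _ => tau_succ_t₁) hy
  cases hyz

end DivergenceCounterexample

open DivergenceCounterexample in
/-- there are an LTS and a symmetric relation R satisfying condition (T)
and relating divergent states to divergent states only, such that R relates two states
that are not divergence-preserving branching bisimilar. -/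
theorem condT_divergence_respecting_not_sufficient :
    ∃ (S Act : Type) (tr : S → Act → S → Prop) (τ : Act) (R : S → S → Prop),
      Symmetric R ∧ CondT tr τ R ∧
      (∀ u v, R u v → Divergent tr τ u → Divergent tr τ v) ∧
      (∃ s t, R s t ∧ ¬ DPBBisimilar tr τ s t) :=
  ⟨State, Label, Step, .tau, Rel, rel_symmetric, condT_rel, fun _ _ => divergent_of_rel,
    .s, .t, .s_t, not_dpbBisimilar_s_t⟩
end

section
/- The relation ⇔Δ of divergence-preserving branching bisimilarity is itself a divergence-preserving branching bisimulation: it is symmetric and satisfies both condition (T) and the divergence condition (D). -/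
/-!
Symmetry and (T) are inherited from the divergence-preserving branching bisimulation `B`
witnessing `s ⇔Δ t`. For (D), follow the divergence `s = s₀ →τ s₁ →τ ⋯` with respect to this
single `B`: if every `sₖ` stays `B`-related to `t`, condition (D) of `B` applies. Otherwise some
step `sⱼ →τ sⱼ₊₁` leaves the `B`-class of `t`, and (T) for `B` matches it by `t ⇒ t'' →(τ)̂ t'`
with `sⱼ₊₁ B t'`; since `t' ≠ t`, this path from `t` to `t'` contains at least one τ-step.
-/

section

variable {S Act : Type*} {tr : S → Act → S → Prop} {τ : Act} {B : S → S → Prop}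

theorem CondT.exists_tauPlus_of_tauStep_of_not_rel (hT : CondT tr τ B) {s s' t : S}
    (hst : B s t) (hs : tr s τ s') (hs't : ¬ B s' t) :
    ∃ t', TauPlus tr τ t t' ∧ B s' t' := by
  obtain ⟨t'', t', hreach, hopt, -, hs't'⟩ := hT s t τ s' hst hs
  refine ⟨t', ?_, hs't'⟩
  rcases hopt with hstep | ⟨-, rfl⟩
  · exact Relation.TransGen.tail' hreach hstep
  · rcases Relation.reflTransGen_iff_eq_or_transGen.mp hreach with rfl | hplus
    · exact absurd hs't' hs't
    · exact hplus

theorem IsDPBB.exists_tauPlus_of_divergence (hB : IsDPBB tr τ B) {t : S} {sk : ℕ → S}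
    (h0 : B (sk 0) t) (hstep : ∀ k, tr (sk k) τ (sk (k + 1))) :
    ∃ t', TauPlus tr τ t t' ∧ ∃ k, B (sk k) t' := by
  by_cases hexit : ∃ j, B (sk j) t ∧ ¬ B (sk (j + 1)) t
  · obtain ⟨j, hj, hj'⟩ := hexit
    obtain ⟨t', ht', hB'⟩ := hB.1.2.exists_tauPlus_of_tauStep_of_not_rel hj (hstep j) hj'
    exact ⟨t', ht', j + 1, hB'⟩
  · push Not at hexit
    have hall : ∀ k, B (sk k) t := fun k => Nat.rec h0 (fun j hj => hexit j hj) k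
    exact hB.2 (sk 0) t sk h0 rfl hstep hall

theorem dpbbisimilar_symmetric : Symmetric (DPBBisimilar tr τ) :=
  fun _ _ ⟨B, hB, hst⟩ => ⟨B, hB, hB.1.1 hst⟩

theorem condT_dpbbisimilar : CondT tr τ (DPBBisimilar tr τ) := by
  rintro s t a s' ⟨B, hB, hst⟩ hstep
  obtain ⟨t'', t', hreach, hopt, hst'', hs't'⟩ := hB.1.2 s t a s' hst hstep
  exact ⟨t'', t', hreach, hopt, ⟨B, hB, hst''⟩, ⟨B, hB, hs't'⟩⟩

theorem condD_dpbbisimilar : CondD tr τ (DPBBisimilar tr τ) := by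
  rintro s t sk ⟨B, hB, hst⟩ rfl hstep -
  obtain ⟨t', ht', k, hk⟩ := hB.exists_tauPlus_of_divergence hst hstep
  exact ⟨t', ht', k, B, hB, hk⟩

end

/-- divergence-preserving branching bisimilarity is itself a
divergence-preserving branching bisimulation. -/
theorem dpbb_is_dpbb {S Act : Type*} (tr : S → Act → S → Prop) (τ : Act) :
    IsDPBB tr τ (DPBBisimilar tr τ) :=
  ⟨⟨dpbbisimilar_symmetric, condT_dpbbisimilar⟩, condD_dpbbisimilar⟩
end

section
/- Modal characterisation: two states s and t of a labelled transition system are divergence-preserving branching bisimilar if and only if s and t satisfy exactly the same formulas of the modal logic Φ whose formulas are generated by negation ¬φ, conjunction ⋀Φ' over sets Φ' of formulas, the binary just-before modality φ⟨a⟩ψ for each action a in Act_τ, and the unary divergence modality Δφ. -/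
/-- Formulas of the modal logic: negation, (arbitrary set-indexed) conjunction, the
binary just-before modality ⟨a⟩, and the divergence modality Δ. -/
inductive Formula (Act : Type) : Type 1 where
  | neg : Formula Act → Formula Act
  | conj : (ι : Type) → (ι → Formula Act) → Formula Act
  | jb : Formula Act → Act → Formula Act → Formula Act
  | div : Formula Act → Formula Act

/-- The satisfaction relation. -/
def Sat {S Act : Type} (tr : S → Act → S → Prop) (τ : Act) : S → Formula Act → Prop
  | s, .neg φ => ¬ Sat tr τ s φ
  | s, .conj ι f => ∀ i : ι, Sat tr τ s (f i)
  | s, .jb φ a ψ => ∃ s'' s', TauReach tr τ s s'' ∧ OptStep tr τ s'' a s' ∧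
      Sat tr τ s'' φ ∧ Sat tr τ s' ψ
  | s, .div φ => ∃ u : ℕ → S, TauReach tr τ s (u 0) ∧
      (∀ k, tr (u k) τ (u (k + 1))) ∧ (∀ k, Sat tr τ (u k) φ)

/-!
Invariance is proved by induction on formulas. The only delicate case is `Δ`: a divergence
`u` through `φ`-states has to be matched by a divergence of the bisimilar state, and it is
built one `τ`-step at a time. A state `w` bisimilar to some `u K` either stays bisimilar to all
later `u (K + k)`, and then (D) supplies a `τ`-path, or some step of `u` is answered by a
`τ`-path of `w`; in both cases the stuttering lemma makes the first step of that path already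
bisimilar to a state of `u`.

Conversely, modal equivalence is a divergence-preserving branching bisimulation. Every state
`x` has a characteristic formula, the conjunction over all inequivalent `y` of a formula
separating `x` from `y`; it holds exactly at the states equivalent to `x`. Condition (T) is
then tested with `χ_s ⟨a⟩ χ_s'` and condition (D) with `Δ (⋁ₖ χ_{sₖ})`.
-/

open Relation

theorem exists_seq_of_forall_exists {α : Type*} {P : α → Prop} {r : α → α → Prop}
    (h : ∀ x, P x → ∃ y, P y ∧ r x y) {x : α} (hx : P x) :
    ∃ f : ℕ → α, f 0 = x ∧ ∀ n, P (f n) ∧ r (f n) (f (n + 1)) := by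
  choose g hg using h
  let f : ℕ → {a // P a} := fun n =>
    Nat.rec ⟨x, hx⟩ (fun _ a => ⟨g a.1 a.2, (hg a.1 a.2).1⟩) n
  exact ⟨fun n => (f n).1, rfl, fun n => ⟨(f n).2, (hg _ (f n).2).2⟩⟩

theorem Nat.exists_and_not_succ_of_not_forall {P : ℕ → Prop} (h₀ : P 0) (h : ¬ ∀ n, P n) :
    ∃ n, P n ∧ ¬ P (n + 1) := by
  by_contra! hstep
  exact h fun n => Nat.rec h₀ hstep n

section Bisimilarity

variable {S Act : Type*} {tr : S → Act → S → Prop} {τ : Act}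

theorem OptStep.tauReach {x y : S} (h : OptStep tr τ x τ y) : TauReach tr τ x y := by
  rcases h with h | ⟨-, rfl⟩
  · exact ReflTransGen.single h
  · exact ReflTransGen.refl

namespace DPBBisimilar

theorem symm {x y : S} : DPBBisimilar tr τ x y → DPBBisimilar tr τ y x
  | ⟨B, hB, hxy⟩ => ⟨B, hB, hB.1.1 hxy⟩

theorem condT : CondT tr τ (DPBBisimilar tr τ) := by
  rintro s t a s' ⟨B, hB, hst⟩ hstep
  obtain ⟨t'', t', ht'', ht', hst'', hst'⟩ := hB.1.2 s t a s' hst hstep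
  exact ⟨t'', t', ht'', ht', ⟨B, hB, hst''⟩, ⟨B, hB, hst'⟩⟩

theorem exists_optStep {x y x' : S} {a : Act} (hxy : DPBBisimilar tr τ x y)
    (hx : OptStep tr τ x a x') :
    ∃ y'' y', TauReach tr τ y y'' ∧ OptStep tr τ y'' a y' ∧
      DPBBisimilar tr τ x y'' ∧ DPBBisimilar tr τ x' y' := by
  rcases hx with hx | ⟨rfl, rfl⟩
  · exact condT x y a x' hxy hx
  · exact ⟨y, y, ReflTransGen.refl, Or.inr ⟨rfl, rfl⟩, hxy, hxy⟩

theorem exists_tauReach {x y x' : S} (hxy : DPBBisimilar tr τ x y)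
    (hx : TauReach tr τ x x') : ∃ y', TauReach tr τ y y' ∧ DPBBisimilar tr τ x' y' := by
  induction hx with
  | refl => exact ⟨y, ReflTransGen.refl, hxy⟩
  | tail _ hstep ih =>
    obtain ⟨y₁, hy₁, hb₁⟩ := ih
    obtain ⟨y'', y', hy'', hy', -, hb'⟩ := condT _ _ τ _ hb₁ hstep
    exact ⟨y', (hy₁.trans hy'').trans hy'.tauReach, hb'⟩

theorem condD : CondD tr τ (DPBBisimilar tr τ) := by
  intro s t sk hst h0 hstep hall
  by_contra! hno
  obtain ⟨B, hB, hBst⟩ := hst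
  -- otherwise every step of `sk` is answered by `t` standing still, and (D) for `B` applies
  have hBt : ∀ k, B (sk k) t := by
    intro k
    induction k with
    | zero => exact h0 ▸ hBst
    | succ n ih =>
      obtain ⟨t'', t', ht'', ht', -, hB'⟩ := hB.1.2 _ _ _ _ ih (hstep n)
      rcases reflTransGen_iff_eq_or_transGen.mp (ht''.trans ht'.tauReach) with rfl | hplus
      · exact hB'
      · exact absurd ⟨B, hB, hB'⟩ (hno t' hplus (n + 1))
  obtain ⟨t', hplus, k, hk⟩ := hB.2 s t sk hBst h0 hstep hBt
  exact hno t' hplus k ⟨B, hB, hk⟩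

end DPBBisimilar

def Stuttering (tr : S → Act → S → Prop) (τ : Act) (a m : S) : Prop :=
  ∃ y y', DPBBisimilar tr τ a y ∧ TauReach tr τ y m ∧ TauReach tr τ m y' ∧
    DPBBisimilar tr τ a y'

theorem isDPBB_dpbBisimilar_or_stuttering :
    IsDPBB tr τ fun u v =>
      DPBBisimilar tr τ u v ∨ Stuttering tr τ u v ∨ Stuttering tr τ v u := by
  refine ⟨⟨?_, ?_⟩, ?_⟩
  · rintro u v (h | h | h)
    exacts [Or.inl h.symm, Or.inr (Or.inr h), Or.inr (Or.inl h)]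
  · rintro p q α p' (hpq | ⟨z, z', -, -, hz', hpz'⟩ | ⟨z, z', hqz, hzp, -, -⟩) hstep
    · obtain ⟨q'', q', h₁, h₂, h₃, h₄⟩ := DPBBisimilar.condT _ _ _ _ hpq hstep
      exact ⟨q'', q', h₁, h₂, Or.inl h₃, Or.inl h₄⟩
    · obtain ⟨q'', q', h₁, h₂, h₃, h₄⟩ := DPBBisimilar.condT _ _ _ _ hpz' hstep
      exact ⟨q'', q', hz'.trans h₁, h₂, Or.inl h₃, Or.inl h₄⟩
    · obtain ⟨q₁, hq₁, hpq₁⟩ := hqz.symm.exists_tauReach hzp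
      obtain ⟨q'', q', h₁, h₂, h₃, h₄⟩ := DPBBisimilar.condT _ _ _ _ hpq₁ hstep
      exact ⟨q'', q', hq₁.trans h₁, h₂, Or.inl h₃, Or.inl h₄⟩
  · intro p q sk hpq h0 hstep hall
    by_contra! hno
    -- unless a `τ⁺`-successor of `q` is bisimilar to some `sₖ`, all `(sₖ, q)` are bisimilar
    have hbisim : ∀ k, DPBBisimilar tr τ (sk k) q := by
      intro k
      rcases hall k with h | ⟨z, z', -, -, hz', hz'k⟩ | ⟨z, z', hkz, hzq, -, -⟩
      · exact h
      · rcases reflTransGen_iff_eq_or_transGen.mp hz' with rfl | hplus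
        · exact hz'k
        · exact absurd hz'k (hno z' hplus k).1
      · obtain ⟨q₁, hq₁, hkq₁⟩ := hkz.symm.exists_tauReach hzq
        rcases reflTransGen_iff_eq_or_transGen.mp hq₁ with rfl | hplus
        · exact hkq₁
        · exact absurd hkq₁ (hno q₁ hplus k).1
    obtain ⟨q', hplus, k, hk⟩ := DPBBisimilar.condD p q sk (h0 ▸ hbisim 0) h0 hstep hbisim
    exact (hno q' hplus k).1 hk

theorem DPBBisimilar.of_stuttering {a m : S} (h : Stuttering tr τ a m) :
    DPBBisimilar tr τ a m :=
  ⟨_, isDPBB_dpbBisimilar_or_stuttering, Or.inr (Or.inl h)⟩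

theorem DPBBisimilar.exists_tauStep_of_tauPlus {a w w' : S} (hw : DPBBisimilar tr τ a w)
    (hplus : TauPlus tr τ w w') (hw' : DPBBisimilar tr τ a w') :
    ∃ x, tr w τ x ∧ DPBBisimilar tr τ a x := by
  obtain ⟨x, hwx, hxw'⟩ := TransGen.head'_iff.mp hplus
  exact ⟨x, hwx, of_stuttering ⟨w, w', hw, ReflTransGen.single hwx, hxw', hw'⟩⟩

theorem DPBBisimilar.exists_tauStep_of_divergence {u : ℕ → S}
    (hu : ∀ k, tr (u k) τ (u (k + 1))) {w : S} {K : ℕ} (hK : DPBBisimilar tr τ (u K) w) :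
    ∃ w' K', tr w τ w' ∧ DPBBisimilar tr τ (u K') w' := by
  by_cases hall : ∀ k, DPBBisimilar tr τ (u (K + k)) w
  · obtain ⟨w', hplus, j, hj⟩ :=
      condD (u K) w (fun k => u (K + k)) hK rfl (fun k => hu (K + k)) hall
    obtain ⟨x, hwx, hx⟩ := (hall j).exists_tauStep_of_tauPlus hplus hj
    exact ⟨x, K + j, hwx, hx⟩
  · obtain ⟨k, hk, hk₁⟩ := Nat.exists_and_not_succ_of_not_forall hK hall
    obtain ⟨w'', w', hw'', hw', hkw'', hkw'⟩ := condT _ _ _ _ hk (hu (K + k))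
    rcases reflTransGen_iff_eq_or_transGen.mp hw'' with rfl | hplus
    · rcases hw' with hstep | ⟨-, rfl⟩
      · exact ⟨w', K + k + 1, hstep, hkw'⟩
      · exact absurd hkw' hk₁
    · obtain ⟨x, hwx, hx⟩ := hk.exists_tauStep_of_tauPlus hplus hkw''
      exact ⟨x, K + k, hwx, hx⟩

theorem DPBBisimilar.exists_divergence {u : ℕ → S} (hu : ∀ k, tr (u k) τ (u (k + 1)))
    {w : S} (hw : DPBBisimilar tr τ (u 0) w) :
    ∃ v : ℕ → S, v 0 = w ∧
      ∀ i, (∃ k, DPBBisimilar tr τ (u k) (v i)) ∧ tr (v i) τ (v (i + 1)) := by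
  refine exists_seq_of_forall_exists (P := fun x => ∃ K, DPBBisimilar tr τ (u K) x)
    (r := TauStep tr τ) (fun x ⟨K, hK⟩ => ?_) ⟨0, hw⟩
  obtain ⟨x', K', hxx', hx'⟩ := exists_tauStep_of_divergence hu hK
  exact ⟨x', ⟨K', hx'⟩, hxx'⟩

end Bisimilarity

section Modal

variable {S Act : Type} {tr : S → Act → S → Prop} {τ : Act}

theorem sat_of_dpbBisimilar (φ : Formula Act) :
    ∀ {x y : S}, DPBBisimilar tr τ x y → Sat tr τ x φ → Sat tr τ y φ := by
  induction φ with
  | neg φ ih => exact fun hxy hx hy => hx (ih hxy.symm hy)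
  | conj ι f ih => exact fun hxy hx i => ih i hxy (hx i)
  | jb φ a ψ ihφ ihψ =>
    rintro x y hxy ⟨x'', x', hx'', hx', hφ, hψ⟩
    obtain ⟨y₀, hy₀, hb₀⟩ := hxy.exists_tauReach hx''
    obtain ⟨y'', y', hy'', hy', hb'', hb'⟩ := hb₀.exists_optStep hx'
    exact ⟨y'', y', hy₀.trans hy'', hy', ihφ hb'' hφ, ihψ hb' hψ⟩
  | div φ ih =>
    rintro x y hxy ⟨u, hu₀, hu, hφ⟩
    obtain ⟨w, hw, hb⟩ := hxy.exists_tauReach hu₀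
    obtain ⟨v, rfl, hv⟩ := hb.exists_divergence hu
    refine ⟨v, hw, fun i => (hv i).2, fun i => ?_⟩
    obtain ⟨k, hk⟩ := (hv i).1
    exact ih hk (hφ k)

def ModalEquiv (tr : S → Act → S → Prop) (τ : Act) (x y : S) : Prop :=
  ∀ φ : Formula Act, Sat tr τ x φ ↔ Sat tr τ y φ

theorem ModalEquiv.refl (x : S) : ModalEquiv tr τ x x := fun _ => Iff.rfl

def Formula.disj (ι : Type) (f : ι → Formula Act) : Formula Act :=
  .neg (.conj ι fun i => .neg (f i))

theorem sat_disj {x : S} {ι : Type} {f : ι → Formula Act} :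
    Sat tr τ x (.disj ι f) ↔ ∃ i, Sat tr τ x (f i) := by
  simp [Formula.disj, Sat]

theorem exists_sat_and_not_sat_of_not_modalEquiv {x y : S} (h : ¬ ModalEquiv tr τ x y) :
    ∃ χ, Sat tr τ x χ ∧ ¬ Sat tr τ y χ := by
  by_contra! hxy
  refine h fun φ => ⟨hxy φ, fun hy => ?_⟩
  by_contra hx
  exact hxy (.neg φ) hx hy

theorem exists_formula_sat_iff_modalEquiv (x : S) :
    ∃ χ : Formula Act, ∀ y, Sat tr τ y χ ↔ ModalEquiv tr τ x y := by
  choose d hdx hdy using fun y : {y // ¬ ModalEquiv tr τ x y} =>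
    exists_sat_and_not_sat_of_not_modalEquiv y.2
  refine ⟨.conj _ d, fun y => ⟨fun hy => ?_, fun hxy => (hxy _).1 hdx⟩⟩
  by_contra h
  exact hdy ⟨y, h⟩ (hy ⟨y, h⟩)

theorem ModalEquiv.condT : CondT tr τ (ModalEquiv tr τ) := by
  intro s t a s' hst hstep
  obtain ⟨χ, hχ⟩ := exists_formula_sat_iff_modalEquiv (tr := tr) (τ := τ) s
  obtain ⟨χ', hχ'⟩ := exists_formula_sat_iff_modalEquiv (tr := tr) (τ := τ) s'
  have hs : Sat tr τ s (.jb χ a χ') :=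
    ⟨s, s', .refl, .inl hstep, (hχ s).2 (refl s), (hχ' s').2 (refl s')⟩
  obtain ⟨t'', t', ht'', ht', h'', h'⟩ := (hst _).1 hs
  exact ⟨t'', t', ht'', ht', (hχ t'').1 h'', (hχ' t').1 h'⟩

theorem ModalEquiv.condD : CondD tr τ (ModalEquiv tr τ) := by
  intro s t sk hst h0 hstep _
  choose χ hχ using fun k => exists_formula_sat_iff_modalEquiv (tr := tr) (τ := τ) (sk k)
  have hs : Sat tr τ s (.div (.disj ℕ χ)) :=
    ⟨sk, h0 ▸ .refl, hstep, fun k => sat_disj.2 ⟨k, (hχ k _).2 (refl _)⟩⟩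
  obtain ⟨v, hv₀, hv, hvχ⟩ := (hst _).1 hs
  obtain ⟨k, hk⟩ := sat_disj.1 (hvχ 1)
  exact ⟨v 1, TransGen.tail' hv₀ (hv 0), k, (hχ k _).1 hk⟩

theorem ModalEquiv.isDPBB : IsDPBB tr τ (ModalEquiv tr τ) :=
  ⟨⟨fun _ _ h φ => (h φ).symm, condT⟩, condD⟩

end Modal

/-- modal characterisation of divergence-preserving branching
bisimilarity. -/
theorem dpbb_modal_characterisation {S Act : Type} (tr : S → Act → S → Prop) (τ : Act)
    (s t : S) :
    DPBBisimilar tr τ s t ↔ (∀ φ : Formula Act, Sat tr τ s φ ↔ Sat tr τ t φ) :=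
  ⟨fun h φ => ⟨sat_of_dpbBisimilar φ h, sat_of_dpbBisimilar φ h.symm⟩,
    fun h => ⟨ModalEquiv tr τ, ModalEquiv.isDPBB, h⟩⟩
end
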